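/- arXiv:2412.05283 — 2 statements merged into one kernel-verified Lean document; each statement's English description precedes it below -/
import Mathlib

section
/- Let n ≥ 2 and 1 ≤ k ≤ n−1. The set of polynomials {e₁, e₂, ..., e_{n−1}, x₁ + x₂ + ⋯ + x_k} is algebraically independent over ℂ, where e_i denotes the i-th elementary symmetric polynomial in the variables x₁, ..., x_n. -/
/-!
Let `R` be the algebra generated by `e₁, …, e_{n-1}` and `p = ∑_{j ∈ S} x_j` with `S` a nonempty
proper subset of the variables. Every permutation of the variables fixes `R`, so if `p` were
algebraic over `R`, then so would be all its conjugates, in particular the differences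
`p - (a b) • p = x_a - x_b` (for `a ∈ S`, `b ∉ S`) and their conjugates `x_i - x_j`.
Since `n x_i = e₁ + ∑_j (x_i - x_j)` and `n ≠ 0` in characteristic zero, each `x_i`, hence
`e_n = x₁ ⋯ x_n`, would be algebraic over `R`, contradicting the algebraic independence of
`e₁, …, e_n`.
-/

open MvPolynomial Finset Equiv Algebra

theorem Equiv.Perm.exists_apply_eq_apply_eq {α : Type*} {a b i j : α} (hab : a ≠ b) (hij : i ≠ j) :
    ∃ e : Perm α, e a = i ∧ e b = j := by
  obtain ⟨e, he⟩ := Perm.exists_extending_pair ![a, b] ![i, j]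
    (injective_pair_iff_ne.2 hab) (injective_pair_iff_ne.2 hij)
  exact ⟨e, he 0, he 1⟩

theorem AlgebraicIndependent.snoc_iff_transcendental {R A : Type*} [CommRing R] [CommRing A]
    [Algebra R A] {m : ℕ} {x : Fin m → A} (hx : AlgebraicIndependent R x) (a : A) :
    AlgebraicIndependent R (Fin.snoc x a : Fin (m + 1) → A) ↔
      Transcendental (adjoin R (Set.range x)) a := by
  rw [← hx.option_iff_transcendental]
  refine (algebraicIndependent_equiv' finSuccEquivLast.symm (funext fun o ↦ ?_)).symm
  cases o <;> simp

namespace MvPolynomial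

variable {σ K : Type*}

variable (K) in
theorem algebraicIndependent_esymm [CommRing K] [Fintype σ] {n : ℕ}
    (hn : n ≤ Fintype.card σ) : AlgebraicIndependent K (fun i : Fin n ↦ esymm σ K (i + 1)) := by
  rw [algebraicIndependent_iff_injective_aeval]
  have haeval : aeval (fun i : Fin n ↦ esymm σ K (i + 1)) =
      (symmetricSubalgebra σ K).val.comp (esymmAlgHom σ K n) := by
    ext i; simp [esymmAlgHom]
  rw [haeval]
  exact Subtype.val_injective.comp (esymmAlgHom_injective K hn)

theorem esymm_card [CommSemiring K] [Fintype σ] : esymm σ K (Fintype.card σ) = ∏ i, X i := by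
  rw [esymm, ← Finset.card_univ, powersetCard_self, sum_singleton]

theorem rename_sum_X_sub_rename_mul_swap [CommRing K] [DecidableEq σ] {S : Finset σ} {a b : σ}
    (ha : a ∈ S) (hb : b ∉ S) (e : Perm σ) :
    rename e (∑ j ∈ S, X j) - rename (e * swap a b) (∑ j ∈ S, X j) =
      (X (e a) - X (e b) : MvPolynomial σ K) := by
  simp only [map_sum, rename_X, ← sum_sub_distrib, Perm.mul_apply]
  rw [sum_eq_single a]
  · rw [swap_apply_left]
  · intro j hj hja
    rw [swap_apply_of_ne_of_ne hja (ne_of_mem_of_not_mem hj hb), sub_self]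
  · exact fun h ↦ absurd ha h

section Algebraic

variable [CommRing K] {R : Subalgebra K (MvPolynomial σ K)}

theorem IsAlgebraic.rename_of_le_symmetricSubalgebra (hR : R ≤ symmetricSubalgebra σ K)
    {p : MvPolynomial σ K} (hp : IsAlgebraic R p) (e : Perm σ) : IsAlgebraic R (rename e p) :=
  hp.algHom (R := R) (B := MvPolynomial σ K)
    { toRingHom := (rename (R := K) e).toRingHom, commutes' := fun r ↦ hR r.2 e }

variable [IsDomain K]

theorem isAlgebraic_X_sub_X_of_isAlgebraic_sum_X [DecidableEq σ]
    (hR : R ≤ symmetricSubalgebra σ K) {S : Finset σ} {a b : σ} (ha : a ∈ S) (hb : b ∉ S)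
    (hS : IsAlgebraic R (∑ j ∈ S, X j : MvPolynomial σ K)) (i j : σ) :
    IsAlgebraic R (X i - X j : MvPolynomial σ K) := by
  rcases eq_or_ne i j with rfl | hij
  · rw [sub_self]
    exact isAlgebraic_zero
  obtain ⟨e, rfl, rfl⟩ := Perm.exists_apply_eq_apply_eq (ne_of_mem_of_not_mem ha hb) hij
  rw [← rename_sum_X_sub_rename_mul_swap ha hb]
  exact Subalgebra.sub_mem (Subalgebra.algebraicClosure R _)
    (hS.rename_of_le_symmetricSubalgebra hR e) (hS.rename_of_le_symmetricSubalgebra hR _)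

theorem isAlgebraic_X_of_isAlgebraic_X_sub_X [Fintype σ] [CharZero K] (he : esymm σ K 1 ∈ R)
    (h : ∀ i j, IsAlgebraic R (X i - X j : MvPolynomial σ K)) (i : σ) :
    IsAlgebraic R (X i : MvPolynomial σ K) := by
  have hsum : Fintype.card σ • (X i : MvPolynomial σ K) = esymm σ K 1 + ∑ j, (X i - X j) := by
    rw [esymm_one, sum_sub_distrib, sum_const, card_univ, add_sub_cancel]
  have hcard : (Fintype.card σ : R) ∈ nonZeroDivisors R :=
    mem_nonZeroDivisors_of_ne_zero (Nat.cast_ne_zero.2 (Fintype.card_pos_iff.2 ⟨i⟩).ne')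
  refine IsAlgebraic.of_smul hcard ?_
  rw [Nat.cast_smul_eq_nsmul, hsum]
  exact Subalgebra.add_mem (Subalgebra.algebraicClosure R _)
    (isAlgebraic_algebraMap (⟨_, he⟩ : R)) (Subalgebra.sum_mem _ fun j _ ↦ h i j)

theorem algebraicIndependent_snoc_esymm_sum_X [Fintype σ] [DecidableEq σ] [CharZero K] {m : ℕ}
    (hσ : Fintype.card σ = m + 1) {S : Finset σ} {a b : σ} (ha : a ∈ S) (hb : b ∉ S) :
    AlgebraicIndependent K (Fin.snoc (fun i : Fin m ↦ esymm σ K (i + 1)) (∑ j ∈ S, X j) :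
      Fin (m + 1) → MvPolynomial σ K) := by
  have hm : 0 < m := by
    have := Fintype.one_lt_card_iff_nontrivial.2 ⟨a, b, ne_of_mem_of_not_mem ha hb⟩
    omega
  have hall := algebraicIndependent_esymm (σ := σ) K hσ.ge
  have hE : AlgebraicIndependent K fun i : Fin m ↦ esymm σ K (i + 1) :=
    hall.comp Fin.castSucc (Fin.castSucc_injective m)
  set R := adjoin K (Set.range fun i : Fin m ↦ esymm σ K (i + 1))
  have hR : R ≤ symmetricSubalgebra σ K :=
    adjoin_le (Set.range_subset_iff.2 fun i ↦ esymm_isSymmetric σ K _)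
  have he : esymm σ K 1 ∈ R := subset_adjoin ⟨⟨0, hm⟩, rfl⟩
  have htop : Transcendental R (esymm σ K (m + 1)) := by
    refine (hE.snoc_iff_transcendental _).1 ?_
    convert hall using 1
    funext i
    cases i using Fin.lastCases <;> simp
  rw [hE.snoc_iff_transcendental]
  intro hS
  refine htop ?_
  rw [← hσ, esymm_card]
  have hdiff := isAlgebraic_X_sub_X_of_isAlgebraic_sum_X hR ha hb hS
  exact Subalgebra.prod_mem (Subalgebra.algebraicClosure R _) fun i _ ↦
    isAlgebraic_X_of_isAlgebraic_X_sub_X he hdiff i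

end Algebraic

end MvPolynomial

theorem stmt0_general (n k : ℕ) (hk1 : 1 ≤ k) (hk2 : k ≤ n - 1) :
    AlgebraicIndependent ℂ (fun i : Fin n =>
      if (i : ℕ) < n - 1 then MvPolynomial.esymm (Fin n) ℂ ((i : ℕ) + 1)
      else ∑ j ∈ Finset.univ.filter (fun j : Fin n => (j : ℕ) < k),
        MvPolynomial.X j) := by
  obtain ⟨m, rfl⟩ : ∃ m, n = m + 1 := ⟨n - 1, by omega⟩
  convert algebraicIndependent_snoc_esymm_sum_X (K := ℂ) (Fintype.card_fin (m + 1))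
    (S := Finset.univ.filter fun j : Fin (m + 1) ↦ (j : ℕ) < k)
    (a := 0) (b := ⟨k, by omega⟩) (by simpa using Nat.succ_le_iff.1 hk1) (by simp) using 1
  funext i
  cases i using Fin.lastCases <;> simp

/-- For n ≥ 2 and 1 ≤ k ≤ n−1, the polynomials
e₁, ..., e_{n−1}, x₁ + ⋯ + x_k are algebraically independent over ℂ. -/
theorem stmt0 (n k : ℕ) (hn : 2 ≤ n) (hk1 : 1 ≤ k) (hk2 : k ≤ n - 1) :
    AlgebraicIndependent ℂ (fun i : Fin n =>
      if (i : ℕ) < n - 1 then MvPolynomial.esymm (Fin n) ℂ ((i : ℕ) + 1)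
      else ∑ j ∈ Finset.univ.filter (fun j : Fin n => (j : ℕ) < k),
        MvPolynomial.X j) :=
  stmt0_general n k hk1 hk2
end

section
/- Let n ≥ 3 and let f₁, ..., fₙ ∈ ℂ[x₁, ..., xₙ] be given by f_i = e_i(x₁,...,xₙ) for 1 ≤ i ≤ n−1 (the elementary symmetric polynomials), and fₙ = x_{a} + x_{a+1} + ⋯ + x_{b} for some 1 ≤ a ≤ b ≤ n with (a, b) ≠ (1, n) (i.e., fₙ is the sum over a proper, nonempty interval of the variables). Then the Jacobian determinant det(∂f_i/∂x_j) is a nonzero polynomial. -/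
/-!
Evaluate the Jacobian at a point `p` whose coordinates are distinct except for
`p i₁ = p i₂`, where `i₁ ∈ I` and `i₂ ∉ I`. Since `∂e_{k+1}/∂x_j = e_k(x₁, …, x̂_j, …, xₙ)`,
Vieta's formulas show that a kernel vector `v` of the first `n - 1` rows makes
`nodalSum p v t = ∑_j v_j ∏_{m ≠ j} (t - p_m)` constant in `t`; it vanishes at the double node,
so it vanishes identically. Evaluating it at the simple nodes kills `v` off `{i₁, i₂}`, and at a
non-node gives `v i₂ = -v i₁`. The last row then reads `v i₁ = 0`, so the evaluated Jacobian is nonsingular.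
-/

open Finset MvPolynomial

namespace MvPolynomial

variable {σ R : Type*} [CommSemiring R] [DecidableEq σ]

theorem pderiv_prod_X (j : σ) (s : Finset σ) :
    pderiv j (∏ i ∈ s, X i : MvPolynomial σ R) =
      if j ∈ s then ∏ i ∈ s.erase j, X i else 0 := by
  nontriviality R
  have hnotMem : ∀ s : Finset σ, j ∉ s → pderiv j (∏ i ∈ s, X i : MvPolynomial σ R) = 0 :=
    fun s hj => pderiv_eq_zero_of_notMem_vars fun h => hj <| by
      obtain ⟨i, hi, hji⟩ := mem_biUnion.mp (vars_prod (R := R) X h)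
      rw [vars_X, mem_singleton] at hji; exact hji ▸ hi
  split_ifs with hj
  · rw [← mul_prod_erase s _ hj, pderiv_mul, pderiv_X_self, hnotMem _ (notMem_erase j s),
      mul_zero, add_zero, one_mul]
  · exact hnotMem s hj

theorem pderiv_esymm_succ [Fintype σ] (j : σ) (k : ℕ) :
    pderiv j (esymm σ R (k + 1)) = ∑ t ∈ powersetCard k (univ.erase j), ∏ i ∈ t, X i := by
  simp_rw [esymm, map_sum, pderiv_prod_X, sum_ite, sum_const_zero, add_zero]
  refine sum_nbij' (·.erase j) (insert j) ?_ ?_ ?_ ?_ fun _ _ => rfl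
  · intro t ht
    simp only [mem_filter, mem_powersetCard] at ht ⊢
    exact ⟨erase_subset_erase _ ht.1.1, by rw [card_erase_of_mem ht.2, ht.1.2]; rfl⟩
  · intro t ht
    simp only [mem_filter, mem_powersetCard, subset_erase] at ht ⊢
    exact ⟨⟨subset_univ _, card_insert_of_notMem ht.1.2 ▸ congrArg (· + 1) ht.2⟩,
      mem_insert_self _ _⟩
  · intro t ht
    exact insert_erase (mem_filter.mp ht).2
  · intro t ht
    exact erase_insert (subset_erase.mp (mem_powersetCard.mp ht).1).2

end MvPolynomial

theorem Multiset.prod_map_sub_eq_sum_esymm {R : Type*} [CommRing R] (s : Multiset R) (t : R) :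
    (s.map (t - ·)).prod =
      ∑ k ∈ Finset.range (s.card + 1), (-1) ^ k * s.esymm k * t ^ (s.card - k) := by
  simpa [Polynomial.eval_multiset_prod, Polynomial.eval_finsetSum, mul_assoc] using
    congrArg (Polynomial.eval t) (Multiset.prod_X_sub_X_eq_sum_esymm s)

theorem Finset.prod_erase_eq_prod_erase_of_apply_eq {ι M : Type*} [DecidableEq ι] [CommMonoid M]
    {s : Finset ι} {f : ι → M} {i₁ i₂ : ι} (h₁ : i₁ ∈ s) (h₂ : i₂ ∈ s) (h : f i₁ = f i₂) :
    ∏ m ∈ s.erase i₁, f m = ∏ m ∈ s.erase i₂, f m := by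
  obtain rfl | hne := eq_or_ne i₁ i₂
  · rfl
  rw [← mul_prod_erase _ _ (mem_erase.mpr ⟨hne.symm, h₂⟩),
    ← mul_prod_erase _ _ (mem_erase.mpr ⟨hne, h₁⟩), erase_right_comm, h]

section NodalSum

variable {ι R : Type*} [Fintype ι] [DecidableEq ι] [CommRing R]

def nodalSum (p v : ι → R) (t : R) : R :=
  ∑ j, (∏ m ∈ univ.erase j, (t - p m)) * v j

theorem nodalSum_eq_sum_esymm (p v : ι → R) (t : R) :
    nodalSum p v t = ∑ k ∈ range (Fintype.card ι),
      (-1) ^ k * (∑ j, ((univ.erase j).val.map p).esymm k * v j) *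
        t ^ (Fintype.card ι - 1 - k) := by
  have hcard (j : ι) : ((univ.erase j).val.map p).card = Fintype.card ι - 1 := by simp
  simp_rw [mul_sum, sum_mul]
  rw [sum_comm]
  refine sum_congr rfl fun j _ => ?_
  have hpos : 0 < Fintype.card ι := Fintype.card_pos_iff.mpr ⟨j⟩
  rw [prod_eq_multiset_prod, show (fun m => t - p m) = (t - ·) ∘ p from rfl, ← Multiset.map_map,
    Multiset.prod_map_sub_eq_sum_esymm, hcard, Nat.sub_add_cancel hpos, sum_mul]
  exact sum_congr rfl fun k _ => by ring

theorem nodalSum_eq_nodalSum_of_esymm_eq_zero {p v : ι → R}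
    (h : ∀ k < Fintype.card ι - 1, ∑ j, ((univ.erase j).val.map p).esymm k * v j = 0) (t s : R) :
    nodalSum p v t = nodalSum p v s := by
  rw [nodalSum_eq_sum_esymm, nodalSum_eq_sum_esymm]
  refine sum_congr rfl fun k hk => ?_
  obtain hlt | heq := lt_or_eq_of_le (Nat.le_sub_one_of_lt (mem_range.mp hk))
  · rw [h k hlt, mul_zero, zero_mul, zero_mul]
  · rw [heq, Nat.sub_self, pow_zero, pow_zero]

theorem nodalSum_apply_self (p v : ι → R) (l : ι) :
    nodalSum p v (p l) = (∏ m ∈ univ.erase l, (p l - p m)) * v l := by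
  refine sum_eq_single l (fun j _ hjl => ?_) (by simp)
  rw [prod_eq_zero (mem_erase.mpr ⟨Ne.symm hjl, mem_univ l⟩) (sub_self _), zero_mul]

theorem nodalSum_apply_eq_zero_of_apply_eq {p : ι → R} (v : ι → R) {i₁ i₂ : ι} (hne : i₁ ≠ i₂)
    (hp : p i₁ = p i₂) : nodalSum p v (p i₁) = 0 := by
  refine sum_eq_zero fun j _ => ?_
  obtain rfl | hj := eq_or_ne j i₁
  · rw [prod_eq_zero (mem_erase.mpr ⟨hne.symm, mem_univ i₂⟩) (by rw [hp, sub_self]), zero_mul]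
  · rw [prod_eq_zero (mem_erase.mpr ⟨hj.symm, mem_univ i₁⟩) (sub_self _), zero_mul]

end NodalSum

section Kernel

variable {ι R : Type*} [Fintype ι] [DecidableEq ι] [CommRing R] [IsDomain R]

theorem eq_zero_of_nodalSum_apply_self_eq_zero {p v : ι → R} {l : ι} (hl : ∀ m ≠ l, p m ≠ p l)
    (h : nodalSum p v (p l) = 0) : v l = 0 := by
  rw [nodalSum_apply_self] at h
  refine (mul_eq_zero.mp h).resolve_left (prod_ne_zero_iff.mpr fun m hm => ?_)
  exact sub_ne_zero.mpr (hl m (mem_erase.mp hm).1).symm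

theorem eq_smul_sub_single_of_nodalSum_update_eq_zero {q v : ι → R} (hq : q.Injective) {t₀ : R}
    (ht₀ : t₀ ∉ Set.range q) {i₁ i₂ : ι} (hne : i₁ ≠ i₂)
    (hQ : ∀ t, nodalSum (Function.update q i₁ (q i₂)) v t = 0) :
    v = v i₁ • (Pi.single i₁ 1 - Pi.single i₂ 1) := by
  set p := Function.update q i₁ (q i₂)
  have hp : p i₁ = p i₂ := by simp [p, hne.symm]
  have hout : ∀ l, l ≠ i₁ → l ≠ i₂ → v l = 0 := by
    refine fun l h₁ h₂ => eq_zero_of_nodalSum_apply_self_eq_zero (fun m hml => ?_) (hQ _)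
    by_cases hm : m = i₁
    · simpa [p, hm, h₁] using hq.ne (Ne.symm h₂)
    · simpa [p, hm, h₁] using hq.ne hml
  have hpair : v i₁ + v i₂ = 0 := by
    have ht₀p : ∀ m, t₀ - p m ≠ 0 := fun m => sub_ne_zero.mpr fun h => ht₀ <| by
      by_cases hm : m = i₁ <;> simp [p, hm, h]
    have h := hQ t₀
    rw [nodalSum, ← sum_subset (subset_univ {i₁, i₂}) fun m _ hm => by
        simp only [mem_insert, mem_singleton, not_or] at hm
        rw [hout m hm.1 hm.2, mul_zero],
      sum_pair hne, prod_erase_eq_prod_erase_of_apply_eq (f := fun m => t₀ - p m) (mem_univ i₁)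
        (mem_univ i₂) (by rw [hp]), ← mul_add] at h
    exact (mul_eq_zero.mp h).resolve_left (prod_ne_zero_iff.mpr fun m _ => ht₀p m)
  funext l
  by_cases h₁ : l = i₁
  · subst h₁; simp [hne]
  by_cases h₂ : l = i₂
  · subst h₂; simp [h₁]; linear_combination hpair
  · simp [h₁, h₂, hout l h₁ h₂]

end Kernel

section Jacobian

variable {K : Type*} [CommRing K] {n : ℕ}

variable (K n) in
noncomputable def esymmSumJacobian (I : Finset (Fin n)) :
    Matrix (Fin n) (Fin n) (MvPolynomial (Fin n) K) :=
  Matrix.of fun i j =>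
    pderiv j (if (i : ℕ) < n - 1 then esymm (Fin n) K ((i : ℕ) + 1) else ∑ t ∈ I, X t)

theorem eval_esymmSumJacobian_of_lt (I : Finset (Fin n)) (p : Fin n → K) {i : Fin n}
    (hi : (i : ℕ) < n - 1) (j : Fin n) :
    eval p (esymmSumJacobian K n I i j) = ((univ.erase j).val.map p).esymm i := by
  rw [esymmSumJacobian, Matrix.of_apply, if_pos hi, pderiv_esymm_succ, esymm_map_val]
  simp

theorem eval_esymmSumJacobian_of_le (I : Finset (Fin n)) (p : Fin n → K) {i : Fin n}
    (hi : n - 1 ≤ (i : ℕ)) (j : Fin n) :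
    eval p (esymmSumJacobian K n I i j) = if j ∈ I then 1 else 0 := by
  rw [esymmSumJacobian, Matrix.of_apply, if_neg (not_lt.mpr hi), map_sum, map_sum]
  simp [pderiv_X, Pi.single_apply]

theorem sum_esymm_mul_eq_zero_of_mulVec_eq_zero {I : Finset (Fin n)} {p v : Fin n → K}
    (hv : ((esymmSumJacobian K n I).map (eval p)).mulVec v = 0) :
    ∀ k < Fintype.card (Fin n) - 1, ∑ j, ((univ.erase j).val.map p).esymm k * v j = 0 := by
  intro k hk
  rw [Fintype.card_fin] at hk
  simpa [Matrix.mulVec, dotProduct, eval_esymmSumJacobian_of_lt I p (i := ⟨k, by omega⟩) hk]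
    using congrFun hv ⟨k, by omega⟩

theorem sum_eq_zero_of_mulVec_eq_zero (hn : 0 < n) {I : Finset (Fin n)} {p v : Fin n → K}
    (hv : ((esymmSumJacobian K n I).map (eval p)).mulVec v = 0) : ∑ j ∈ I, v j = 0 := by
  simpa [Matrix.mulVec, dotProduct,
    eval_esymmSumJacobian_of_le I p (i := ⟨n - 1, by omega⟩) le_rfl]
    using congrFun hv ⟨n - 1, by omega⟩

theorem det_esymmSumJacobian_ne_zero [IsDomain K] [CharZero K] {I : Finset (Fin n)}
    {i₁ i₂ : Fin n} (h₁ : i₁ ∈ I) (h₂ : i₂ ∉ I) : (esymmSumJacobian K n I).det ≠ 0 := by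
  intro hdet
  set q : Fin n → K := fun j => ((j : ℕ) : K)
  set p := Function.update q i₁ (q i₂)
  obtain ⟨v, hv0, hv⟩ := Matrix.exists_mulVec_eq_zero_iff.mpr <|
    show ((esymmSumJacobian K n I).map (eval p)).det = 0 by
      rw [← RingHom.mapMatrix_apply, ← RingHom.map_det, hdet, map_zero]
  have hne : i₁ ≠ i₂ := ne_of_mem_of_not_mem h₁ h₂
  have hQ (t : K) : nodalSum p v t = 0 :=
    (nodalSum_eq_nodalSum_of_esymm_eq_zero (sum_esymm_mul_eq_zero_of_mulVec_eq_zero hv) t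
      (p i₁)).trans (nodalSum_apply_eq_zero_of_apply_eq v hne (by simp [p, hne.symm]))
  have hker := eq_smul_sub_single_of_nodalSum_update_eq_zero
    (Nat.cast_injective.comp Fin.val_injective) (t₀ := -1)
    (fun ⟨m, hm⟩ => Nat.cast_add_one_ne_zero (m : ℕ) (by rw [show ((m : ℕ) : K) = -1 from hm,
      neg_add_cancel])) hne hQ
  have hlast := sum_eq_zero_of_mulVec_eq_zero i₁.pos hv
  rw [hker] at hlast
  simp only [Pi.smul_apply, smul_eq_mul, ← mul_sum, sum_sub_distrib, Pi.sub_apply, sum_pi_single',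
    if_pos h₁, if_neg h₂, sub_zero, mul_one] at hlast
  exact hv0 (by rw [hker, hlast, zero_smul])

end Jacobian

theorem stmt15_general (n a b : ℕ) (ha : 1 ≤ a) (hab : a ≤ b) (hb : b ≤ n)
    (hproper : ¬(a = 1 ∧ b = n)) :
    Matrix.det (Matrix.of fun i j : Fin n =>
      MvPolynomial.pderiv j
        (if (i : ℕ) < n - 1 then MvPolynomial.esymm (Fin n) ℂ ((i : ℕ) + 1)
         else ∑ t ∈ Finset.univ.filter
            (fun t : Fin n => a ≤ (t : ℕ) + 1 ∧ (t : ℕ) + 1 ≤ b),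
           MvPolynomial.X t)) ≠ 0 := by
  obtain ⟨i₂, hi₂⟩ : ∃ i₂ : Fin n, ¬(a ≤ (i₂ : ℕ) + 1 ∧ (i₂ : ℕ) + 1 ≤ b) := by
    by_cases hbn : b < n
    · exact ⟨⟨b, hbn⟩, by simp⟩
    · exact ⟨⟨0, by omega⟩, by simp only; omega⟩
  exact det_esymmSumJacobian_ne_zero (i₁ := ⟨a - 1, by omega⟩)
    (mem_filter.mpr ⟨mem_univ _, by simp only; omega⟩) (fun h => hi₂ (mem_filter.mp h).2)

/-- For n ≥ 3, the polynomials e₁,...,e_{n−1} together with the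
sum x_a + ⋯ + x_b over a proper nonempty interval ((a,b) ≠ (1,n)) have nonzero
Jacobian determinant. -/
theorem stmt15 (n a b : ℕ) (hn : 3 ≤ n) (ha : 1 ≤ a) (hab : a ≤ b) (hb : b ≤ n)
    (hproper : ¬(a = 1 ∧ b = n)) :
    Matrix.det (Matrix.of fun i j : Fin n =>
      MvPolynomial.pderiv j
        (if (i : ℕ) < n - 1 then MvPolynomial.esymm (Fin n) ℂ ((i : ℕ) + 1)
         else ∑ t ∈ Finset.univ.filter
            (fun t : Fin n => a ≤ (t : ℕ) + 1 ∧ (t : ℕ) + 1 ≤ b),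
           MvPolynomial.X t)) ≠ 0 :=
  stmt15_general n a b ha hab hb hproper
end
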